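/- arXiv:2512.12933 — 2 statements merged into one kernel-verified Lean document; each statement's English description precedes it below -/
import Mathlib

section
/- Let G be a graph on a finite vertex set V with |V| = n ≥ 5, having no twins and not belonging to the family 𝒫₄. Let u and v be adjacent vertices of G with N(u) ∪ N(v) ≠ V, and suppose that u or v is adjacent to every vertex of (N(u) ∪ N(v))∖{u,v}. Then for every graph H on V such that every 3-element subset of V induces a disconnected subgraph in H exactly when it induces a disconnected subgraph in G (i.e. Δ₃(H) = Δ₃(G)), the vertices u and v are adjacent in H. -/
open SimpleGraph
open SimpleGraph

lemma step {V : Type*} {G : SimpleGraph V} {x y : V} (h : G.Reachable x y) (hne : x ≠ y) :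
    ∃ z, G.Adj x z := by
  obtain ⟨w⟩ := h
  cases w with
  | nil => exact absurd rfl hne
  | cons h' _ => exact ⟨_, h'⟩

lemma conn_center {V : Type*} {G : SimpleGraph V} {p q r : V} (hpq : G.Adj p q) (hpr : G.Adj p r) :
    (G.induce ({p, q, r} : Set V)).Connected := by
  rw [SimpleGraph.connected_iff]
  have hp : p ∈ ({p,q,r} : Set V) := by simp
  refine ⟨?_, ⟨⟨p, hp⟩⟩⟩
  have key : ∀ x : ↥({p,q,r} : Set V), (G.induce ({p,q,r} : Set V)).Reachable x ⟨p, hp⟩ := by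
    intro x
    rcases x.2 with h | h | h
    · have e : x = ⟨p, hp⟩ := Subtype.ext h
      rw [e]
    · exact SimpleGraph.Adj.reachable (show G.Adj ↑x p by rw [h]; exact hpq.symm)
    · simp only [Set.mem_singleton_iff] at h
      exact SimpleGraph.Adj.reachable (show G.Adj ↑x p by rw [h]; exact hpr.symm)
  intro x y
  exact (key x).trans (key y).symm

lemma hasnbr {V : Type*} {G : SimpleGraph V} {a b c : V}
    (h : (G.induce ({a, b, c} : Set V)).Connected) (hab : a ≠ b) :
    G.Adj a b ∨ G.Adj a c := by
  have ha : a ∈ ({a,b,c} : Set V) := by simp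
  have hb : b ∈ ({a,b,c} : Set V) := by simp
  have hr := h.preconnected ⟨a, ha⟩ ⟨b, hb⟩
  obtain ⟨z, hz⟩ := step hr (by simp [Subtype.ext_iff, hab])
  obtain ⟨zv, hzv⟩ := z
  have hadj : G.Adj a zv := hz
  rcases hzv with h | h | h
  · exact absurd h.symm hadj.ne
  · exact Or.inl (h ▸ hadj)
  · simp only [Set.mem_singleton_iff] at h; exact Or.inr (h ▸ hadj)

lemma conn3 {V : Type*} (G : SimpleGraph V) {a b c : V} (hab : a ≠ b) (hac : a ≠ c) (_hbc : b ≠ c) :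
    (G.induce ({a, b, c} : Set V)).Connected ↔
      (G.Adj a b ∧ G.Adj a c) ∨ (G.Adj a b ∧ G.Adj b c) ∨ (G.Adj a c ∧ G.Adj b c) := by
  constructor
  · intro h
    have h1 := hasnbr h hab
    have h2 : G.Adj b a ∨ G.Adj b c := by
      have e : ({a,b,c} : Set V) = {b,a,c} := by ext x; simp; tauto
      exact hasnbr (e ▸ h) hab.symm
    have h3 : G.Adj c a ∨ G.Adj c b := by
      have e : ({a,b,c} : Set V) = {c,a,b} := by ext x; simp; tauto
      exact hasnbr (e ▸ h) hac.symm
    rcases h2 with h2 | h2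
    · rcases h3 with h3 | h3
      · exact Or.inl ⟨h2.symm, h3.symm⟩
      · exact Or.inr (Or.inl ⟨h2.symm, h3.symm⟩)
    · rcases h1 with h1 | h1
      · exact Or.inr (Or.inl ⟨h1, h2⟩)
      · exact Or.inr (Or.inr ⟨h1, h2⟩)
  · rintro (⟨h1, h2⟩ | ⟨h1, h2⟩ | ⟨h1, h2⟩)
    · exact conn_center h1 h2
    · have e : ({a,b,c} : Set V) = {b,a,c} := by ext x; simp; tauto
      rw [e]; exact conn_center h1.symm h2
    · have e : ({a,b,c} : Set V) = {c,a,b} := by ext x; simp; tauto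
      rw [e]; exact conn_center h1.symm h2.symm


def D3 {V : Type*} (G : SimpleGraph V) (a b c : V) : Prop :=
  (G.Adj a b ∧ G.Adj a c) ∨ (G.Adj a b ∧ G.Adj b c) ∨ (G.Adj a c ∧ G.Adj b c)

lemma core {V : Type*} (G H : SimpleGraph V)
    (htwins : ¬ ∃ u v : V, u ≠ v ∧ G.neighborSet u \ {v} = G.neighborSet v \ {u})
    (hP4 : ¬ ∃ (x y z w : V) (V' : Set V),
      x ≠ y ∧ x ≠ z ∧ x ≠ w ∧ y ≠ z ∧ y ≠ w ∧ z ≠ w ∧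
      V' ⊆ ({x, y, z, w} : Set V)ᶜ ∧
      G.neighborSet x = V' ∪ {y} ∧ G.neighborSet y = V' ∪ {x, z} ∧
      G.neighborSet z = V' ∪ {y, w} ∧ G.neighborSet w = V' ∪ {z})
    (u v : V) (hadj : G.Adj u v)
    (hfull : ∀ x : V, x ≠ u → x ≠ v → (G.Adj u x ∨ G.Adj v x) → G.Adj u x)
    (key : ∀ a b c : V, a ≠ b → a ≠ c → b ≠ c → (D3 H a b c ↔ D3 G a b c)) :
    H.Adj u v := by
  by_contra hnH
  have huv : u ≠ v := hadj.ne
  -- Step 1: H-edges from u and v to every G-neighbor of u other than v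
  have h1 : ∀ x : V, G.Adj u x → x ≠ v → H.Adj u x ∧ H.Adj v x := by
    intro x hx hxv
    have hk := key u v x huv hx.ne (Ne.symm hxv)
    have hG : D3 G u v x := Or.inl ⟨hadj, hx⟩
    have hHd := hk.mpr hG
    unfold D3 at hHd
    tauto
  -- Main case split: is v adjacent to all of A?
  by_cases hvall : ∀ x : V, G.Adj u x → x ≠ v → G.Adj v x
  · -- u and v are twins
    apply htwins
    refine ⟨u, v, huv, ?_⟩
    ext x
    simp only [Set.mem_diff, mem_neighborSet, Set.mem_singleton_iff]
    constructor
    · rintro ⟨h, hxv⟩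
      exact ⟨hvall x h hxv, h.ne'⟩
    · rintro ⟨h, hxu⟩
      exact ⟨hfull x hxu h.ne' (Or.inr h), h.ne'⟩
  · push_neg at hvall
    obtain ⟨a, hua, hav, hva⟩ := hvall
    have hau : a ≠ u := hua.ne'
    -- Step 3: every other member of A is G-adjacent to both v and a
    have h3 : ∀ y : V, G.Adj u y → y ≠ v → y ≠ a → G.Adj v y ∧ G.Adj a y := by
      intro y hy hyv hya
      have hH1 := (h1 a hua hav).2
      have hH2 := (h1 y hy hyv).2
      have hk := key v a y (Ne.symm hav) (Ne.symm hyv) (Ne.symm hya)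
      have hGd : D3 G v a y := hk.mp (Or.inl ⟨hH1, hH2⟩)
      unfold D3 at hGd
      tauto
    -- Step 4: facts about vertices z outside N(u) ∪ N(v)
    have h4 : ∀ z : V, ¬G.Adj u z → ¬G.Adj v z →
        ¬H.Adj v z ∧ ¬H.Adj a z ∧ (G.Adj a z ↔ H.Adj u z) := by
      intro z hz1 hz2
      have hzu : z ≠ u := fun e => hz2 (by rw [e]; exact hadj.symm)
      have hzv : z ≠ v := fun e => hz1 (by rw [e]; exact hadj)
      have hza : z ≠ a := fun e => hz1 (by rw [e]; exact hua)
      have Hva := (h1 a hua hav).2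
      have Hua := (h1 a hua hav).1
      have hk1 := key v a z (Ne.symm hav) (Ne.symm hzv) (Ne.symm hza)
      have hGf : ¬ D3 G v a z := by unfold D3; tauto
      have hHf : ¬ D3 H v a z := fun d => hGf (hk1.mp d)
      have hHvz : ¬H.Adj v z := fun h => hHf (Or.inl ⟨Hva, h⟩)
      have hHaz : ¬H.Adj a z := fun h => hHf (Or.inr (Or.inl ⟨Hva, h⟩))
      refine ⟨hHvz, hHaz, ?_⟩
      have hk2 := key u a z hua.ne (Ne.symm hzu) (Ne.symm hza)
      constructor
      · intro hGaz
        have hHd := hk2.mpr (Or.inr (Or.inl ⟨hua, hGaz⟩))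
        unfold D3 at hHd
        tauto
      · intro hHuz
        have hGd := hk2.mp (Or.inl ⟨Hua, hHuz⟩)
        unfold D3 at hGd
        tauto
    by_cases hz : ∃ z : V, ¬G.Adj u z ∧ ¬G.Adj v z ∧ H.Adj u z
    · -- P4 case
      obtain ⟨z₀, hz1, hz2, hz3⟩ := hz
      have hz0u : z₀ ≠ u := fun e => hz2 (by rw [e]; exact hadj.symm)
      have hz0v : z₀ ≠ v := fun e => hz1 (by rw [e]; exact hadj)
      have hz0a : z₀ ≠ a := fun e => hz1 (by rw [e]; exact hua)
      have haz0 : G.Adj a z₀ := (h4 z₀ hz1 hz2).2.2.mpr hz3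
      -- uniqueness of z₀
      have hu_unique : ∀ z' : V, ¬G.Adj u z' → ¬G.Adj v z' → z' ≠ z₀ →
          ¬H.Adj u z' ∧ ¬H.Adj z₀ z' := by
        intro z' h1' h2' hne
        have hz'u : z' ≠ u := fun e => h2' (by rw [e]; exact hadj.symm)
        have hk := key u z₀ z' (Ne.symm hz0u) (Ne.symm hz'u) (Ne.symm hne)
        have hGf : ¬ D3 G u z₀ z' := by unfold D3; tauto
        have hHf : ¬ D3 H u z₀ z' := fun d => hGf (hk.mp d)
        unfold D3 at hHf
        tauto
      -- z₀ not G-adjacent to any other outside vertex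
      have hz0B : ∀ z' : V, ¬G.Adj u z' → ¬G.Adj v z' → z' ≠ z₀ → ¬G.Adj z₀ z' := by
        intro z' h1' h2' hne
        have hz'a : z' ≠ a := fun e => h1' (by rw [e]; exact hua)
        obtain ⟨hHuz', hHz0z'⟩ := hu_unique z' h1' h2' hne
        have hHaz0 := (h4 z₀ hz1 hz2).2.1
        have hHaz' := (h4 z' h1' h2').2.1
        have hk := key a z₀ z' (Ne.symm hz0a) (Ne.symm hz'a) (Ne.symm hne)
        have hHf : ¬ D3 H a z₀ z' := by unfold D3; tauto
        have hGf : ¬ D3 G a z₀ z' := fun d => hHf (hk.mpr d)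
        intro hcon
        exact hGf (Or.inr (Or.inl ⟨haz0, hcon⟩))
      -- every member of A is G-adjacent to z₀
      have hAz0 : ∀ y : V, G.Adj u y → y ≠ v → G.Adj y z₀ := by
        intro y hy hyv
        have hyz0 : y ≠ z₀ := fun e => hz1 (by rw [← e]; exact hy)
        have Huy := (h1 y hy hyv).1
        have hk := key u y z₀ hy.ne (Ne.symm hz0u) hyz0
        have hGd := hk.mp (Or.inl ⟨Huy, hz3⟩)
        unfold D3 at hGd
        tauto
      -- build the P4 structure (v, u, a, z₀)
      apply hP4
      refine ⟨v, u, a, z₀, {t | G.Adj u t ∧ t ≠ v ∧ t ≠ a},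
        Ne.symm huv, Ne.symm hav, Ne.symm hz0v, hua.ne, Ne.symm hz0u, Ne.symm hz0a, ?_, ?_, ?_, ?_, ?_⟩
      · intro t ht
        simp only [Set.mem_compl_iff, Set.mem_insert_iff, Set.mem_singleton_iff]
        push_neg
        exact ⟨ht.2.1, ht.1.ne', ht.2.2, fun e => hz1 (by rw [← e]; exact ht.1)⟩
      · -- N(v) = V' ∪ {u}
        ext x
        simp only [mem_neighborSet, Set.mem_union, Set.mem_setOf_eq, Set.mem_singleton_iff]
        constructor
        · intro hvx
          by_cases hxu : x = u
          · exact Or.inr hxu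
          · have hxa : x ≠ a := fun e => hva (by rw [← e]; exact hvx)
            exact Or.inl ⟨hfull x hxu hvx.ne' (Or.inr hvx), hvx.ne', hxa⟩
        · rintro (⟨h, hv, ha⟩ | h)
          · exact (h3 x h hv ha).1
          · rw [h]; exact hadj.symm
      · -- N(u) = V' ∪ {v, a}
        ext x
        simp only [mem_neighborSet, Set.mem_union, Set.mem_setOf_eq, Set.mem_insert_iff,
          Set.mem_singleton_iff]
        constructor
        · intro hux
          by_cases hxv : x = v
          · exact Or.inr (Or.inl hxv)
          · by_cases hxa : x = a
            · exact Or.inr (Or.inr hxa)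
            · exact Or.inl ⟨hux, hxv, hxa⟩
        · rintro (⟨h, _, _⟩ | h | h)
          · exact h
          · rw [h]; exact hadj
          · rw [h]; exact hua
      · -- N(a) = V' ∪ {u, z₀}
        ext x
        simp only [mem_neighborSet, Set.mem_union, Set.mem_setOf_eq, Set.mem_insert_iff,
          Set.mem_singleton_iff]
        constructor
        · intro hax
          by_cases hxu : x = u
          · exact Or.inr (Or.inl hxu)
          · by_cases hxz0 : x = z₀
            · exact Or.inr (Or.inr hxz0)
            · have hxv : x ≠ v := fun e => hva (by rw [← e]; exact hax.symm)
              have hxa : x ≠ a := hax.ne'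
              have hGux : G.Adj u x := by
                by_contra hnux
                by_cases hGvx : G.Adj v x
                · exact hnux (hfull x hxu hxv (Or.inr hGvx))
                · have := (hu_unique x hnux hGvx hxz0).1
                  exact this ((h4 x hnux hGvx).2.2.mp hax)
              exact Or.inl ⟨hGux, hxv, hxa⟩
        · rintro (⟨h, hv, ha⟩ | h | h)
          · exact (h3 x h hv ha).2
          · rw [h]; exact hua.symm
          · rw [h]; exact haz0
      · -- N(z₀) = V' ∪ {a}
        ext x
        simp only [mem_neighborSet, Set.mem_union, Set.mem_setOf_eq, Set.mem_singleton_iff]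
        constructor
        · intro hzx
          by_cases hxa : x = a
          · exact Or.inr hxa
          · have hxu : x ≠ u := fun e => hz1 (by rw [← e]; exact hzx.symm)
            have hxv : x ≠ v := fun e => hz2 (by rw [← e]; exact hzx.symm)
            have hxz0 : x ≠ z₀ := hzx.ne'
            have hGux : G.Adj u x := by
              by_contra hnux
              by_cases hGvx : G.Adj v x
              · exact hnux (hfull x hxu hxv (Or.inr hGvx))
              · exact hz0B x hnux hGvx hxz0 hzx
            exact Or.inl ⟨hGux, hxv, hxa⟩
        · rintro (⟨h, hv, _⟩ | h)
          · exact (hAz0 x h hv).symm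
          · rw [h]; exact haz0.symm
    · -- twins case: v and a are twins
      push_neg at hz
      apply htwins
      refine ⟨v, a, Ne.symm hav, ?_⟩
      ext x
      simp only [Set.mem_diff, mem_neighborSet, Set.mem_singleton_iff]
      constructor
      · rintro ⟨hvx, hxa⟩
        refine ⟨?_, hvx.ne'⟩
        by_cases hxu : x = u
        · rw [hxu]; exact hua.symm
        · have hux : G.Adj u x := hfull x hxu hvx.ne' (Or.inr hvx)
          exact (h3 x hux hvx.ne' hxa).2
      · rintro ⟨hax, hxv⟩
        refine ⟨?_, hax.ne'⟩
        by_cases hxu : x = u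
        · rw [hxu]; exact hadj.symm
        · by_cases hGux : G.Adj u x
          · exact (h3 x hGux hxv hax.ne').1
          · by_cases hGvx : G.Adj v x
            · exact hGvx
            · exact absurd ((h4 x hGux hGvx).2.2.mp hax) (hz x hGux hGvx)


/-- If `G` has no twins, is not in `𝒫₄`, `u ∼ v`, `N(u) ∪ N(v) ≠ V`, and `u` or `v`
is adjacent to every vertex of `(N(u) ∪ N(v)) \ {u,v}`, then the edge `uv` is present
in every graph with the same 3-cut complex as `G`. -/
theorem stmt_15 {V : Type*} [Fintype V] [DecidableEq V] (G : SimpleGraph V)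
    (hn : 5 ≤ Fintype.card V)
    (htwins : ¬ ∃ u v : V, u ≠ v ∧ G.neighborSet u \ {v} = G.neighborSet v \ {u})
    (hP4 : ¬ ∃ (x y z w : V) (V' : Set V),
      x ≠ y ∧ x ≠ z ∧ x ≠ w ∧ y ≠ z ∧ y ≠ w ∧ z ≠ w ∧
      V' ⊆ ({x, y, z, w} : Set V)ᶜ ∧
      G.neighborSet x = V' ∪ {y} ∧ G.neighborSet y = V' ∪ {x, z} ∧
      G.neighborSet z = V' ∪ {y, w} ∧ G.neighborSet w = V' ∪ {z})
    (u v : V) (hadj : G.Adj u v)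
    (hdom : G.neighborSet u ∪ G.neighborSet v ≠ Set.univ)
    (hfull : (∀ x ∈ (G.neighborSet u ∪ G.neighborSet v) \ {u, v}, G.Adj u x) ∨
             (∀ x ∈ (G.neighborSet u ∪ G.neighborSet v) \ {u, v}, G.Adj v x)) :
    ∀ H : SimpleGraph V,
      (∀ T : Finset V, T.card = 3 →
        (¬ (H.induce (T : Set V)).Connected ↔ ¬ (G.induce (T : Set V)).Connected)) →
      H.Adj u v := by
  intro H hH
  have key : ∀ a b c : V, a ≠ b → a ≠ c → b ≠ c → (D3 H a b c ↔ D3 G a b c) := by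
    intro a b c hab hac hbc
    have hT : ({a, b, c} : Finset V).card = 3 :=
      Finset.card_eq_three.mpr ⟨a, b, c, hab, hac, hbc, rfl⟩
    have hiff := hH {a, b, c} hT
    have hco : ((({a, b, c} : Finset V) : Set V)) = ({a, b, c} : Set V) := by simp
    rw [hco, conn3 H hab hac hbc, conn3 G hab hac hbc] at hiff
    exact not_iff_not.mp hiff
  rcases hfull with hl | hr
  · refine core G H htwins hP4 u v hadj ?_ key
    intro x hxu hxv hor
    refine hl x ?_
    simp only [Set.mem_diff, Set.mem_union, mem_neighborSet, Set.mem_insert_iff,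
      Set.mem_singleton_iff]
    exact ⟨hor, by tauto⟩
  · refine (core G H htwins hP4 v u hadj.symm ?_ key).symm
    intro x hxv hxu hor
    refine hr x ?_
    simp only [Set.mem_diff, Set.mem_union, mem_neighborSet, Set.mem_insert_iff,
      Set.mem_singleton_iff]
    exact ⟨by tauto, by tauto⟩
end

section
/- Let G be a graph on a finite vertex set V with |V| = n ≥ 5, having no twins and not belonging to the family 𝒫₄. Let u and v be adjacent vertices of G with N(u) ∪ N(v) ≠ V, and suppose that each of u and v has exactly one non-neighbor in (N(u) ∪ N(v))∖{u,v}. Then for every graph H on V such that every 3-element subset of V induces a disconnected subgraph in H exactly when it induces a disconnected subgraph in G (i.e. Δ₃(H) = Δ₃(G)), the vertices u and v are adjacent in H. -/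
/-!
Suppose `H` has the same 3-cut complex as `G` but `uv ∉ H`. A triple of vertices is connected
in `G` iff it is connected in `H`, and a connected triple missing one edge contains the other
two; so edges present in one graph and missing in the other force edges in the other graph.
Since `uv ∈ G \ H`, every `x ∈ N(u) ∪ N(v)` is adjacent in `H` to both `u` and `v`. Let `a`
and `b` be the non-neighbours of `u` and `v` there (so `a ≠ b`). Then `ua ∈ H \ G` forces `a` to
be adjacent in `G` to all of `(N(u) ∪ N(v)) \ {u, v, a}`, so if `N(a) ⊆ N(u) ∪ N(v)` then `u`
and `a` are twins. Hence `a` has a neighbour `z ∉ N(u) ∪ N(v)`. Now `az ∉ H` (else `uz ∈ G`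
via the triple `u a z`), so the triple `a b z` gives `bz ∈ H`, and then the triple `v b z`
gives `vz ∈ G`, a contradiction.
-/

namespace SimpleGraph

variable {V : Type*}

/-- `Δ₃(G) = Δ₃(H)`. -/
def SameThreeCutComplex (G H : SimpleGraph V) : Prop :=
  ∀ T : Finset V, T.card = 3 →
    ((G.induce (T : Set V)).Connected ↔ (H.induce (T : Set V)).Connected)

variable {G H : SimpleGraph V}

theorem SameThreeCutComplex.symm (h : G.SameThreeCutComplex H) : H.SameThreeCutComplex G :=
  fun T hT => (h T hT).symm

theorem exists_adj_of_induce_connected {s : Set V} (h : (G.induce s).Connected) {x y : V}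
    (hx : x ∈ s) (hy : y ∈ s) (hxy : x ≠ y) : ∃ w ∈ s, G.Adj x w := by
  have : Nontrivial s := ⟨⟨x, hx⟩, ⟨y, hy⟩, fun h => hxy (congrArg Subtype.val h)⟩
  obtain ⟨w, hw⟩ := h.preconnected.exists_adj_of_nontrivial ⟨x, hx⟩
  exact ⟨w, w.2, hw⟩

theorem induce_triple_connected_of_adj_of_adj {c p q : V} (hcp : G.Adj c p) (hcq : G.Adj c q) :
    (G.induce {c, p, q}).Connected := by
  rw [show ({c, p, q} : Set V) = {c, p} ∪ {c, q} by
    rw [← Set.insert_union_distrib, Set.singleton_union]]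
  exact induce_union_connected (induce_pair_connected_of_adj hcp).preconnected
    (induce_pair_connected_of_adj hcq).preconnected ⟨c, by simp⟩

theorem adj_and_adj_of_induce_triple_connected {c p q : V} (h : (G.induce {c, p, q}).Connected)
    (hcp : c ≠ p) (hpq : p ≠ q) (hn : ¬ G.Adj c p) : G.Adj c q ∧ G.Adj p q := by
  constructor
  · obtain ⟨w, hw, hcw⟩ := exists_adj_of_induce_connected h (by simp) (by simp) hcp
    rcases hw with rfl | rfl | rfl
    exacts [(G.irrefl hcw).elim, (hn hcw).elim, hcw]
  · obtain ⟨w, hw, hpw⟩ := exists_adj_of_induce_connected h (by simp) (by simp) hpq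
    rcases hw with rfl | rfl | rfl
    exacts [(hn hpw.symm).elim, (G.irrefl hpw).elim, hpw]

theorem SameThreeCutComplex.adj_and_adj_of_not_adj (hGH : G.SameThreeCutComplex H) {c p q : V}
    (hpq : p ≠ q) (hcp : G.Adj c p) (hcq : G.Adj c q) (hn : ¬ H.Adj c p) :
    H.Adj c q ∧ H.Adj p q := by
  classical
  have hcard : ({c, p, q} : Finset V).card = 3 :=
    Finset.card_eq_three.mpr ⟨c, p, q, hcp.ne, hcq.ne, hpq, rfl⟩
  have hGH₃ : (G.induce {c, p, q}).Connected ↔ (H.induce {c, p, q}).Connected := by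
    rw [← Finset.coe_pair, ← Finset.coe_insert]
    exact hGH _ hcard
  exact adj_and_adj_of_induce_triple_connected
    (hGH₃.mp (induce_triple_connected_of_adj_of_adj hcp hcq)) hcp.ne hpq hn

theorem SameThreeCutComplex.adj_and_adj_of_mem_neighborSet_union
    (hGH : G.SameThreeCutComplex H) {u v x : V} (huv : G.Adj u v) (hH : ¬ H.Adj u v)
    (hx : x ∈ (G.neighborSet u ∪ G.neighborSet v) \ {u, v}) : H.Adj u x ∧ H.Adj v x := by
  obtain ⟨hux | hvx, hxuv⟩ := hx
  · exact hGH.adj_and_adj_of_not_adj (by rintro rfl; simp at hxuv) huv hux hH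
  · exact (hGH.adj_and_adj_of_not_adj (by rintro rfl; simp at hxuv) huv.symm hvx
      fun h => hH h.symm).symm

theorem neighborSet_sdiff_eq_iff {u v : V} :
    G.neighborSet u \ {v} = G.neighborSet v \ {u} ↔
      ∀ x, x ≠ u → x ≠ v → (G.Adj u x ↔ G.Adj v x) := by
  refine ⟨fun h x hxu hxv => ?_, fun h => Set.ext fun x => ?_⟩
  · simpa [hxu, hxv] using Set.ext_iff.mp h x
  · by_cases hxu : x = u
    · subst hxu; simp
    by_cases hxv : x = v
    · subst hxv; simp
    simpa [hxu, hxv] using h x hxu hxv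

theorem neighborSet_sdiff_eq_of_neighborSet_subset {u v a : V} (huv : G.Adj u v)
    (hva : G.Adj v a)
    (hu : ∀ x, x ∈ (G.neighborSet u ∪ G.neighborSet v) \ {u, v} ∧ ¬ G.Adj u x → x = a)
    (ha : ∀ x ∈ (G.neighborSet u ∪ G.neighborSet v) \ {u, v}, x ≠ a → G.Adj a x)
    (hsub : G.neighborSet a ⊆ G.neighborSet u ∪ G.neighborSet v) :
    G.neighborSet u \ {a} = G.neighborSet a \ {u} := by
  refine neighborSet_sdiff_eq_iff.mpr fun x hxu hxa => ⟨fun hux => ?_, fun hax => ?_⟩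
  · by_cases hxv : x = v
    · exact hxv ▸ hva.symm
    exact ha x ⟨Or.inl hux, by simp [hxu, hxv]⟩ hxa
  · by_cases hxv : x = v
    · exact hxv ▸ huv
    by_contra hux
    exact hxa (hu x ⟨⟨hsub hax, by simp [hxu, hxv]⟩, hux⟩)

end SimpleGraph

open SimpleGraph

theorem stmt_16_general {V : Type*} (G : SimpleGraph V)
    (htwins : ¬ ∃ u v : V, u ≠ v ∧ G.neighborSet u \ {v} = G.neighborSet v \ {u})
    (u v : V) (hadj : G.Adj u v)
    (hu : ∃! x, x ∈ (G.neighborSet u ∪ G.neighborSet v) \ {u, v} ∧ ¬ G.Adj u x)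
    (hv : ∃! x, x ∈ (G.neighborSet u ∪ G.neighborSet v) \ {u, v} ∧ ¬ G.Adj v x) :
    ∀ H : SimpleGraph V,
      (∀ T : Finset V, T.card = 3 →
        (¬ (H.induce (T : Set V)).Connected ↔ ¬ (G.induce (T : Set V)).Connected)) →
      H.Adj u v := by
  intro H hHG
  by_contra hH
  have hGH : G.SameThreeCutComplex H := fun T hT => (not_iff_not.mp (hHG T hT)).symm
  obtain ⟨a, ⟨haA, hua⟩, ha_uniq⟩ := hu
  obtain ⟨b, ⟨hbA, hvb⟩, -⟩ := hv
  have hva : G.Adj v a := haA.1.resolve_left hua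
  have hab : a ≠ b := by rintro rfl; exact hvb hva
  have hHA : ∀ x ∈ (G.neighborSet u ∪ G.neighborSet v) \ {u, v}, H.Adj u x ∧ H.Adj v x :=
    fun x => hGH.adj_and_adj_of_mem_neighborSet_union hadj hH
  have hGa : ∀ x ∈ (G.neighborSet u ∪ G.neighborSet v) \ {u, v}, x ≠ a → G.Adj a x :=
    fun x hx hxa => (hGH.symm.adj_and_adj_of_not_adj (Ne.symm hxa) (hHA a haA).1 (hHA x hx).1 hua).2
  obtain ⟨z, haz, hzA⟩ : ∃ z, G.Adj a z ∧ z ∉ G.neighborSet u ∪ G.neighborSet v := by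
    by_contra! hsub
    exact htwins ⟨u, a, ne_of_mem_of_not_mem (Set.mem_insert u {v}) haA.2,
      neighborSet_sdiff_eq_of_neighborSet_subset hadj hva ha_uniq hGa hsub⟩
  have hHaz : ¬ H.Adj a z := fun h => hzA <| Or.inl
    (hGH.symm.adj_and_adj_of_not_adj (ne_of_mem_of_not_mem (Or.inr hadj.symm) hzA)
      (hHA a haA).1.symm h fun h' => hua h'.symm).2
  have hHbz : H.Adj z b :=
    (hGH.adj_and_adj_of_not_adj (ne_of_mem_of_not_mem (Or.inl (hbA.1.resolve_right hvb)) hzA).symm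
      haz (hGa b hbA hab.symm) hHaz).2
  exact hzA <| Or.inr
    (hGH.symm.adj_and_adj_of_not_adj (ne_of_mem_of_not_mem (Or.inl hadj) hzA)
      (hHA b hbA).2.symm hHbz.symm fun h' => hvb h'.symm).2

/-- If `G` has no twins, is not in `𝒫₄`, `u ∼ v`, `N(u) ∪ N(v) ≠ V`, and each of
`u` and `v` has exactly one non-neighbor in `(N(u) ∪ N(v)) \ {u,v}`, then the edge
`uv` is present in every graph with the same 3-cut complex as `G`. -/
theorem stmt_16 {V : Type*} [Fintype V] [DecidableEq V] (G : SimpleGraph V)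
    (hn : 5 ≤ Fintype.card V)
    (htwins : ¬ ∃ u v : V, u ≠ v ∧ G.neighborSet u \ {v} = G.neighborSet v \ {u})
    (hP4 : ¬ ∃ (x y z w : V) (V' : Set V),
      x ≠ y ∧ x ≠ z ∧ x ≠ w ∧ y ≠ z ∧ y ≠ w ∧ z ≠ w ∧
      V' ⊆ ({x, y, z, w} : Set V)ᶜ ∧
      G.neighborSet x = V' ∪ {y} ∧ G.neighborSet y = V' ∪ {x, z} ∧
      G.neighborSet z = V' ∪ {y, w} ∧ G.neighborSet w = V' ∪ {z})
    (u v : V) (hadj : G.Adj u v)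
    (hdom : G.neighborSet u ∪ G.neighborSet v ≠ Set.univ)
    (hu : ∃! x, x ∈ (G.neighborSet u ∪ G.neighborSet v) \ {u, v} ∧ ¬ G.Adj u x)
    (hv : ∃! x, x ∈ (G.neighborSet u ∪ G.neighborSet v) \ {u, v} ∧ ¬ G.Adj v x) :
    ∀ H : SimpleGraph V,
      (∀ T : Finset V, T.card = 3 →
        (¬ (H.induce (T : Set V)).Connected ↔ ¬ (G.induce (T : Set V)).Connected)) →
      H.Adj u v :=
  stmt_16_general G htwins u v hadj hu hv
end
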